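/- arXiv:1709.04523 — 3 statements merged into one kernel-verified Lean document; each statement's English description precedes it below -/
import Mathlib

section
/- Fix g ∈ L¹([0,1]). The map u ↦ (g ∘ u)·u' from the group of orientation-preserving C¹ diffeomorphisms of [0,1] (with the C¹ topology) to L¹([0,1]) is continuous. -/
open MeasureTheory Set

/-- An orientation-preserving `C¹` diffeomorphism of `[0,1]`. -/
def IsDiffeo1 (u : ℝ → ℝ) : Prop :=
  ContDiffOn ℝ 1 u (Icc 0 1) ∧ u 0 = 0 ∧ u 1 = 1 ∧
    ∀ x ∈ Icc (0:ℝ) 1, 0 < derivWithin u (Icc 0 1) x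

/-! Approximate `g` in `L¹([0,1])` by a continuous compactly supported `h`. Every `w ∈ Diff¹₊` is
monotone with `w(0) = 0`, `w(1) = 1`, so `G ↦ (G ∘ w)·w'` is an isometry of `L¹([0,1])`; hence
replacing `g` by `h` moves both `(g ∘ u)·u'` and `(g ∘ v)·v'` by exactly `‖g - h‖₁`. As `h` is
bounded and uniformly continuous and `u'` is bounded, `(h ∘ u)·u' - (h ∘ v)·v'` is uniformly small
once `v` is `C¹`-close to `u`. -/

theorem MeasureTheory.IntegrableOn.exists_hasCompactSupport_setIntegral_norm_sub_le
    {α E : Type*} [TopologicalSpace α] [NormalSpace α] [R1Space α] [WeaklyLocallyCompactSpace α]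
    [MeasurableSpace α] [BorelSpace α] [NormedAddCommGroup E] [NormedSpace ℝ E]
    {μ : Measure α} [μ.Regular] {f : α → E} {s : Set α} (hf : IntegrableOn f s μ)
    (hs : μ s ≠ ⊤) {ε : ℝ} (hε : 0 < ε) :
    ∃ g : α → E, HasCompactSupport g ∧ ∫ x in s, ‖f x - g x‖ ∂μ ≤ ε ∧ Continuous g := by
  have := Measure.Regular.restrict_of_measure_ne_top hs
  obtain ⟨g, hg, hfg, hcont, -⟩ := hf.exists_hasCompactSupport_integral_sub_le hε
  exact ⟨g, hg, hfg, hcont⟩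

theorem integral_abs_sub_le_add_add {α : Type*} [MeasurableSpace α] {μ : Measure α}
    {f₁ f₂ f₃ f₄ : α → ℝ} (h₁ : Integrable f₁ μ) (h₂ : Integrable f₂ μ)
    (h₃ : Integrable f₃ μ) (h₄ : Integrable f₄ μ) :
    ∫ x, |f₁ x - f₄ x| ∂μ ≤
      (∫ x, |f₁ x - f₂ x| ∂μ) + (∫ x, |f₂ x - f₃ x| ∂μ) + ∫ x, |f₃ x - f₄ x| ∂μ := by
  have i₁₂ : Integrable (fun x => |f₁ x - f₂ x|) μ := (h₁.sub h₂).abs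
  have i₂₃ : Integrable (fun x => |f₂ x - f₃ x|) μ := (h₂.sub h₃).abs
  have i₃₄ : Integrable (fun x => |f₃ x - f₄ x|) μ := (h₃.sub h₄).abs
  calc ∫ x, |f₁ x - f₄ x| ∂μ ≤ ∫ x, (|f₁ x - f₂ x| + |f₂ x - f₃ x| + |f₃ x - f₄ x|) ∂μ :=
        integral_mono (h₁.sub h₄).abs ((i₁₂.add i₂₃).add i₃₄) fun x =>
          (abs_sub_le _ (f₃ x) _).trans (add_le_add_left (abs_sub_le _ _ _) _)
    _ = (∫ x, (|f₁ x - f₂ x| + |f₂ x - f₃ x|) ∂μ) + ∫ x, |f₃ x - f₄ x| ∂μ :=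
        integral_add (i₁₂.add i₂₃) i₃₄
    _ = _ := congrArg (· + _) (integral_add i₁₂ i₂₃)

theorem UniformContinuous.exists_pos_abs_mul_sub_mul_lt {h : ℝ → ℝ} (hh : UniformContinuous h)
    {K M η : ℝ} (hK : ∀ y, |h y| ≤ K) (hη : 0 < η) :
    ∃ δ > 0, ∀ a b a' b' : ℝ, |a'| ≤ M → |a - b| < δ → |a' - b'| < δ →
      |h a * a' - h b * b'| < η := by
  set ρ := η / 2 / (|M| + 1)
  have hρ₀ : 0 < ρ := by positivity
  have hρ : ρ * (|M| + 1) = η / 2 := div_mul_cancel₀ _ (by positivity)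
  obtain ⟨δ₁, hδ₁, hδ₁h⟩ := Metric.uniformContinuous_iff.1 hh ρ hρ₀
  set δ₂ := η / 2 / (|K| + 1)
  have hδ₂₀ : 0 < δ₂ := by positivity
  have hδ₂ : δ₂ * (|K| + 1) = η / 2 := div_mul_cancel₀ _ (by positivity)
  refine ⟨min δ₁ δ₂, lt_min hδ₁ hδ₂₀, fun a b a' b' ha' hab ha'b' => ?_⟩
  have h_osc : |h a - h b| < ρ := hδ₁h (hab.trans_le (min_le_left _ _))
  calc |h a * a' - h b * b'| = |(h a - h b) * a' + h b * (a' - b')| := by ring_nf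
    _ ≤ |h a - h b| * |a'| + |h b| * |a' - b'| := by
      rw [← abs_mul, ← abs_mul]; exact abs_add_le _ _
    _ ≤ ρ * |M| + |K| * δ₂ :=
      add_le_add (mul_le_mul h_osc.le (ha'.trans (le_abs_self M)) (abs_nonneg _) hρ₀.le)
        (mul_le_mul ((hK b).trans (le_abs_self K)) (ha'b'.le.trans (min_le_right _ _))
          (abs_nonneg _) (abs_nonneg _))
    _ < η := by nlinarith

theorem UniformContinuous.exists_pos_setIntegral_abs_comp_mul_sub_lt {α : Type*}
    [MeasurableSpace α] {μ : Measure α} {h : ℝ → ℝ} (hh : UniformContinuous h) {K : ℝ}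
    (hK : ∀ y, |h y| ≤ K) {s : Set α} (hs : μ s ≠ ⊤) {u u' : α → ℝ} {M : ℝ}
    (hu' : ∀ x ∈ s, |u' x| ≤ M) {ε : ℝ} (hε : 0 < ε) :
    ∃ δ > 0, ∀ v v' : α → ℝ, (∀ x ∈ s, |u x - v x| < δ ∧ |u' x - v' x| < δ) →
      ∫ x in s, |h (u x) * u' x - h (v x) * v' x| ∂μ < ε := by
  set η := ε / (μ.real s + 1)
  have hη : η * (μ.real s + 1) = ε := div_mul_cancel₀ _ (by positivity)
  obtain ⟨δ, hδ, hclose⟩ := hh.exists_pos_abs_mul_sub_mul_lt hK (M := M) (η := η) (by positivity)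
  refine ⟨δ, hδ, fun v v' huv => ?_⟩
  have hbound : ∀ x ∈ s, ‖|h (u x) * u' x - h (v x) * v' x|‖ ≤ η := fun x hx => by
    rw [Real.norm_eq_abs, abs_abs]
    exact (hclose _ _ _ _ (hu' x hx) (huv x hx).1 (huv x hx).2).le
  calc ∫ x in s, |h (u x) * u' x - h (v x) * v' x| ∂μ ≤ η * μ.real s :=
        (le_abs_self _).trans (norm_setIntegral_le_of_norm_le_const hs.lt_top hbound)
    _ < ε := by nlinarith [measureReal_nonneg (μ := μ) (s := s)]

namespace IsDiffeo1

variable {w : ℝ → ℝ}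

theorem hasDerivWithinAt (hw : IsDiffeo1 w) :
    ∀ x ∈ Icc (0:ℝ) 1, HasDerivWithinAt w (derivWithin w (Icc 0 1) x) (Icc 0 1) x :=
  fun x hx => ((hw.1.differentiableOn one_ne_zero) x hx).hasDerivWithinAt

theorem monotoneOn (hw : IsDiffeo1 w) : MonotoneOn w (Icc 0 1) :=
  monotoneOn_of_hasDerivWithinAt_nonneg (convex_Icc 0 1) hw.1.continuousOn
    (fun x hx => (hw.hasDerivWithinAt x (interior_subset hx)).mono interior_subset)
    (fun x hx => (hw.2.2.2 x (interior_subset hx)).le)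

theorem image_Icc (hw : IsDiffeo1 w) : w '' Icc 0 1 = Icc 0 1 := by
  simpa [hw.2.1, hw.2.2.1] using
    hw.1.continuousOn.image_Icc_of_monotoneOn zero_le_one hw.monotoneOn

theorem continuousOn_derivWithin (hw : IsDiffeo1 w) :
    ContinuousOn (derivWithin w (Icc 0 1)) (Icc 0 1) :=
  hw.1.continuousOn_derivWithin (uniqueDiffOn_Icc zero_lt_one) le_rfl

theorem integrableOn_comp_mul_derivWithin (hw : IsDiffeo1 w) {G : ℝ → ℝ}
    (hG : IntegrableOn G (Icc 0 1)) :
    IntegrableOn (fun x => G (w x) * derivWithin w (Icc 0 1) x) (Icc 0 1) := by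
  rw [← hw.image_Icc, integrableOn_image_iff_integrableOn_deriv_smul_of_monotoneOn
    measurableSet_Icc hw.hasDerivWithinAt hw.monotoneOn] at hG
  simpa only [smul_eq_mul, mul_comm] using hG

theorem setIntegral_comp_mul_derivWithin (hw : IsDiffeo1 w) (G : ℝ → ℝ) :
    ∫ x in Icc 0 1, G (w x) * derivWithin w (Icc 0 1) x = ∫ y in Icc 0 1, G y := by
  conv_rhs => rw [← hw.image_Icc]
  rw [integral_image_eq_integral_deriv_smul_of_monotoneOn measurableSet_Icc
    hw.hasDerivWithinAt hw.monotoneOn]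
  simp only [smul_eq_mul, mul_comm]

theorem setIntegral_abs_comp_mul_derivWithin (hw : IsDiffeo1 w) (G : ℝ → ℝ) :
    ∫ x in Icc 0 1, |G (w x) * derivWithin w (Icc 0 1) x| = ∫ y in Icc 0 1, |G y| := by
  calc _ = ∫ x in Icc 0 1, |G (w x)| * derivWithin w (Icc 0 1) x :=
        setIntegral_congr_fun measurableSet_Icc fun x hx => by
          rw [abs_mul, abs_of_pos (hw.2.2.2 x hx)]
    _ = _ := hw.setIntegral_comp_mul_derivWithin fun y => |G y|

end IsDiffeo1

/-- For fixed `g ∈ L¹([0,1])`, the map `u ↦ (g ∘ u)·u'` from `Diff¹₊([0,1])` with the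
`C¹` metric to `L¹([0,1])` is continuous. -/
theorem continuity_of_substitution
    (g : ℝ → ℝ) (hg : IntegrableOn g (Icc 0 1))
    (u : ℝ → ℝ) (hu : IsDiffeo1 u) :
    ∀ ε > 0, ∃ δ > 0, ∀ v : ℝ → ℝ, IsDiffeo1 v →
      (∀ x ∈ Icc (0:ℝ) 1, |u x - v x| < δ ∧
        |derivWithin u (Icc 0 1) x - derivWithin v (Icc 0 1) x| < δ) →
      (∫ x in Icc (0:ℝ) 1,
        |g (u x) * derivWithin u (Icc 0 1) x - g (v x) * derivWithin v (Icc 0 1) x|) < ε := by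
  intro ε hε
  have hI : volume (Icc (0:ℝ) 1) ≠ ⊤ := measure_Icc_lt_top.ne
  obtain ⟨h, hh_supp, hgh, hh⟩ := hg.exists_hasCompactSupport_setIntegral_norm_sub_le
    hI (by positivity : 0 < ε / 4)
  simp only [Real.norm_eq_abs] at hgh
  obtain ⟨K, hK⟩ := hh.bounded_above_of_compact_support hh_supp
  obtain ⟨M, hM⟩ := isCompact_Icc.exists_bound_of_continuousOn hu.continuousOn_derivWithin
  obtain ⟨δ, hδ, hclose⟩ :=
    (hh_supp.uniformContinuous_of_continuous hh).exists_pos_setIntegral_abs_comp_mul_sub_lt hK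
      hI hM (half_pos hε)
  refine ⟨δ, hδ, fun v hv huv => ?_⟩
  have hhI : IntegrableOn h (Icc 0 1) := hh.integrableOn_Icc
  calc _ ≤ (∫ x in Icc (0:ℝ) 1, |(g (u x) - h (u x)) * derivWithin u (Icc 0 1) x|)
        + (∫ x in Icc (0:ℝ) 1,
            |h (u x) * derivWithin u (Icc 0 1) x - h (v x) * derivWithin v (Icc 0 1) x|)
        + ∫ x in Icc (0:ℝ) 1, |(h (v x) - g (v x)) * derivWithin v (Icc 0 1) x| := by
        simp_rw [sub_mul]
        exact integral_abs_sub_le_add_add (hu.integrableOn_comp_mul_derivWithin hg)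
          (hu.integrableOn_comp_mul_derivWithin hhI) (hv.integrableOn_comp_mul_derivWithin hhI)
          (hv.integrableOn_comp_mul_derivWithin hg)
    _ < ε := by
        rw [hu.setIntegral_abs_comp_mul_derivWithin (fun y => g y - h y),
          hv.setIntegral_abs_comp_mul_derivWithin (fun y => h y - g y)]
        simp_rw [abs_sub_comm (h _) (g _)]
        linarith [hclose v _ huv]
end

section
/- If a sequence (fₙ) of orientation-preserving C^k diffeomorphisms of [0,1] with absolutely continuous k-th derivatives converges to f₀ in the sense that d_{C^k}(fₙ,f₀) → 0 and fₙ^{(k+1)} → f₀^{(k+1)} in L¹, then for any fixed g in the same class, (fₙ ∘ g)^{(k+1)} → (f₀ ∘ g)^{(k+1)} in L¹; i.e., right multiplication by g is continuous. -/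
open MeasureTheory Set Filter Topology intervalIntegral

noncomputable section

/-- An orientation-preserving `C^k` diffeomorphism of `[0,1]` whose `k`-th derivative
is absolutely continuous. -/
structure DiffkAC (k : ℕ) where
  toFun : ℝ → ℝ
  contDiff : ContDiffOn ℝ k toFun (Icc 0 1)
  map0 : toFun 0 = 0
  map1 : toFun 1 = 1
  derivPos : ∀ x ∈ Icc (0:ℝ) 1, 0 < derivWithin toFun (Icc 0 1) x
  ac : ∃ h : ℝ → ℝ, IntegrableOn h (Icc 0 1) ∧ ∀ x ∈ Icc (0:ℝ) 1,
    iteratedDerivWithin k toFun (Icc 0 1) x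
      = iteratedDerivWithin k toFun (Icc 0 1) 0 + ∫ t in (0:ℝ)..x, h t

/-- A choice of the a.e. `(k+1)`-st derivative of `f` (unique up to a.e. equality). -/
def DiffkAC.acDeriv {k : ℕ} (f : DiffkAC k) : ℝ → ℝ := f.ac.choose

/-- The `C^k` distance `d_{C^k}(f,g) = sup|f−g| + Σ_{i=1}^k sup|f^{(i)}−g^{(i)}|`. -/
def dCk (k : ℕ) (f g : DiffkAC k) : ℝ :=
  (⨆ x : Icc (0:ℝ) 1, |f.toFun x - g.toFun x|) +
    ∑ i ∈ Finset.Icc 1 k, ⨆ x : Icc (0:ℝ) 1,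
      |iteratedDerivWithin i f.toFun (Icc 0 1) x - iteratedDerivWithin i g.toFun (Icc 0 1) x|

/-- The metric `d(f,g) = d_{C^k}(f,g) + ∫₀¹ |f^{(k+1)} − g^{(k+1)}|`. -/
def dAC (k : ℕ) (f g : DiffkAC k) : ℝ :=
  dCk k f g + ∫ x in Icc (0:ℝ) 1, |f.acDeriv x - g.acDeriv x|

/-!
Since `(fₙ ∘ g)^{(k)} - (f₀ ∘ g)^{(k)}` is a primitive of `Hₙ - H₀`, the `L¹` norm of `Hₙ - H₀`
is bounded by the total variation of this difference on `[0,1]`. By Faà di Bruno,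
`(F ∘ g)^{(k)} = ∑_{j ≤ k} (F^{(j)} ∘ g) · a_j` with coefficients `a_j` that depend only on `g`
and have bounded variation. The variation of a product `u · a_j` is at most
`sup |u| · V(a_j) + sup |a_j| · V(u)`. For `u = (fₙ^{(j)} - f₀^{(j)}) ∘ g`, `sup |u|` is at most
`d_{C^k}(fₙ, f₀)`, and as `g` is an increasing bijection of `[0,1]`, `V(u)` is the variation of
`fₙ^{(j)} - f₀^{(j)}`: by the mean value theorem it is at most `d_{C^k}(fₙ, f₀)` if `j < k`,
and it is at most `‖Gₙ - G₀‖_{L¹}` if `j = k`.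
-/

open scoped ENNReal

section Variation

variable {α E : Type*} [LinearOrder α] [SeminormedAddCommGroup E]

theorem eVariationOn_add_le (f g : α → E) (s : Set α) :
    eVariationOn (fun x => f x + g x) s ≤ eVariationOn f s + eVariationOn g s := by
  refine iSup_le fun ⟨n, u, hu, us⟩ => ?_
  calc ∑ i ∈ Finset.range n, edist (f (u (i + 1)) + g (u (i + 1))) (f (u i) + g (u i))
      ≤ ∑ i ∈ Finset.range n,
          (edist (f (u (i + 1))) (f (u i)) + edist (g (u (i + 1))) (g (u i))) :=
        Finset.sum_le_sum fun i _ => edist_add_add_le _ _ _ _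
    _ ≤ eVariationOn f s + eVariationOn g s := by
        rw [Finset.sum_add_distrib]
        exact add_le_add (eVariationOn.sum_le hu us) (eVariationOn.sum_le hu us)

theorem BoundedVariationOn.add {f g : α → E} {s : Set α} (hf : BoundedVariationOn f s)
    (hg : BoundedVariationOn g s) : BoundedVariationOn (fun x => f x + g x) s :=
  ne_top_of_le_ne_top (ENNReal.add_ne_top.2 ⟨hf, hg⟩) (eVariationOn_add_le f g s)

theorem BoundedVariationOn.congr {f g : α → E} {s : Set α} (hf : BoundedVariationOn f s)
    (h : EqOn f g s) : BoundedVariationOn g s := by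
  rwa [BoundedVariationOn, ← eVariationOn.eq_of_eqOn h]

theorem boundedVariationOn_const (c : E) (s : Set α) : BoundedVariationOn (fun _ => c) s :=
  (eVariationOn.constant_on (by simp [Set.Subsingleton])).trans_ne ENNReal.zero_ne_top

theorem eVariationOn_sum_le {ι : Type*} (t : Finset ι) (f : ι → α → E) (s : Set α) :
    eVariationOn (fun x => ∑ j ∈ t, f j x) s ≤ ∑ j ∈ t, eVariationOn (f j) s := by
  classical
  induction t using Finset.induction_on with
  | empty => simpa using (eVariationOn.constant_on (by simp [Set.Subsingleton])).le
  | insert j t hj ih =>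
    simp only [Finset.sum_insert hj]
    exact (eVariationOn_add_le _ _ s).trans (add_le_add_right ih _)

theorem eVariationOn_le_of_edist_le {F : Type*} [PseudoEMetricSpace F] {f : α → E} {m : α → F}
    {s : Set α} (h : ∀ x ∈ s, ∀ y ∈ s, x ≤ y → edist (f y) (f x) ≤ edist (m y) (m x)) :
    eVariationOn f s ≤ eVariationOn m s :=
  iSup_le fun ⟨_, _, hu, us⟩ => (Finset.sum_le_sum fun i _ =>
    h _ (us i) _ (us (i + 1)) (hu (Nat.le_succ i))).trans (eVariationOn.sum_le hu us)

theorem eVariationOn_mul_le_of_enorm_le {f u : α → ℝ} {s : Set α} {ε : ℝ≥0∞} {x₀ : α}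
    (hx₀ : x₀ ∈ s) (hf : ∀ x ∈ s, ‖f x‖ₑ ≤ ε) (hfV : eVariationOn f s ≤ ε) :
    eVariationOn (fun x => f x * u x) s ≤ ε * (‖u x₀‖ₑ + 2 * eVariationOn u s) := by
  have hu : ∀ x ∈ s, ‖u x‖ₑ ≤ ‖u x₀‖ₑ + eVariationOn u s := fun x hx => by
    grw [show u x = u x₀ + (u x - u x₀) by abel, enorm_add_le, ← edist_eq_enorm_sub,
      eVariationOn.edist_le _ hx hx₀]
  grw [eVariationOn_fun_mul_le hf hu, hfV]
  exact le_of_eq (by ring)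

end Variation

theorem eVariationOn_Icc_le_of_abs_sub_le {f m : ℝ → ℝ} {a b : ℝ} (hab : a ≤ b)
    (hm : MonotoneOn m (Icc a b))
    (h : ∀ x ∈ Icc a b, ∀ y ∈ Icc a b, x ≤ y → |f y - f x| ≤ m y - m x) :
    eVariationOn f (Icc a b) ≤ ENNReal.ofReal (m b - m a) := by
  have hmV := hm.eVariationOn_eq (left_mem_Icc.2 hab) (right_mem_Icc.2 hab)
  rw [inter_self] at hmV
  refine hmV ▸ eVariationOn_le_of_edist_le fun x hx y hy hxy => ?_
  rw [edist_dist, edist_dist, Real.dist_eq, Real.dist_eq,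
    abs_of_nonneg (sub_nonneg.2 (hm hx hy hxy))]
  exact ENNReal.ofReal_le_ofReal (h x hx y hy hxy)

theorem eVariationOn_Icc_le_of_abs_derivWithin_le {f : ℝ → ℝ} {a b C : ℝ} (hab : a ≤ b)
    (hf : DifferentiableOn ℝ f (Icc a b))
    (hC : ∀ x ∈ Icc a b, |derivWithin f (Icc a b) x| ≤ C) :
    eVariationOn f (Icc a b) ≤ ENNReal.ofReal (C * (b - a)) := by
  have hC₀ : 0 ≤ C := (abs_nonneg _).trans (hC a (left_mem_Icc.2 hab))
  rw [mul_sub]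
  refine eVariationOn_Icc_le_of_abs_sub_le hab
    (fun x _ y _ hxy => mul_le_mul_of_nonneg_left hxy hC₀) fun x hx y hy hxy => ?_
  have := (convex_Icc a b).norm_image_sub_le_of_norm_derivWithin_le hf hC hx hy
  rwa [Real.norm_eq_abs, Real.norm_eq_abs, abs_of_nonneg (sub_nonneg.2 hxy), mul_sub] at this

section Primitive

def IsPrimitiveOn (F h : ℝ → ℝ) (a b : ℝ) : Prop :=
  IntegrableOn h (Icc a b) ∧ ∀ x ∈ Icc a b, F x = F a + ∫ t in a..x, h t

variable {F F₁ F₂ h h₁ h₂ : ℝ → ℝ} {a b : ℝ}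

theorem IsPrimitiveOn.intervalIntegrable (hF : IsPrimitiveOn F h a b) {x y : ℝ}
    (hx : x ∈ Icc a b) (hy : y ∈ Icc a b) : IntervalIntegrable h volume x y :=
  (hF.1.mono_set (uIcc_subset_Icc hx hy)).intervalIntegrable

theorem IsPrimitiveOn.sub (hF₁ : IsPrimitiveOn F₁ h₁ a b) (hF₂ : IsPrimitiveOn F₂ h₂ a b) :
    IsPrimitiveOn (fun x => F₁ x - F₂ x) (fun x => h₁ x - h₂ x) a b := by
  refine ⟨hF₁.1.sub hF₂.1, fun x hx => ?_⟩
  dsimp only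
  have ha : a ∈ Icc a b := ⟨le_rfl, hx.1.trans hx.2⟩
  rw [hF₁.2 x hx, hF₂.2 x hx, intervalIntegral.integral_sub (hF₁.intervalIntegrable ha hx)
    (hF₂.intervalIntegrable ha hx)]
  ring

theorem IsPrimitiveOn.eVariationOn_le (hF : IsPrimitiveOn F h a b) (hab : a ≤ b) :
    eVariationOn F (Icc a b) ≤ ENNReal.ofReal (∫ x in Icc a b, |h x|) := by
  have ha : a ∈ Icc a b := left_mem_Icc.2 hab
  have habs : IsPrimitiveOn (fun x => ∫ t in a..x, |h t|) (fun t => |h t|) a b :=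
    ⟨hF.1.abs, fun x _ => by simp⟩
  have hmono : MonotoneOn (fun x => ∫ t in a..x, |h t|) (Icc a b) := fun x hx y hy hxy => by
    dsimp only
    rw [← intervalIntegral.integral_add_adjacent_intervals (habs.intervalIntegrable ha hx)
      (habs.intervalIntegrable hx hy)]
    exact le_add_of_nonneg_right (intervalIntegral.integral_nonneg hxy fun _ _ => abs_nonneg _)
  convert eVariationOn_Icc_le_of_abs_sub_le hab hmono fun x hx y hy hxy => ?_ using 2
  · rw [intervalIntegral.integral_same, sub_zero, intervalIntegral.integral_of_le hab,
      integral_Icc_eq_integral_Ioc]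
  · rw [hF.2 x hx, hF.2 y hy, add_sub_add_left_eq_sub,
      intervalIntegral.integral_interval_sub_left (hF.intervalIntegrable ha hy)
        (hF.intervalIntegrable ha hx),
      intervalIntegral.integral_interval_sub_left (habs.intervalIntegrable ha hy)
        (habs.intervalIntegrable ha hx)]
    exact intervalIntegral.abs_integral_le_integral_abs hxy

theorem IsPrimitiveOn.boundedVariationOn (hF : IsPrimitiveOn F h a b) (hab : a ≤ b) :
    BoundedVariationOn F (Icc a b) :=
  ne_top_of_le_ne_top ENNReal.ofReal_ne_top (hF.eVariationOn_le hab)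

theorem BoundedVariationOn.ofReal_integral_abs_deriv_le {f : ℝ → ℝ}
    (hf : BoundedVariationOn f (Icc a b)) (hab : a ≤ b) :
    ENNReal.ofReal (∫ x in a..b, |deriv f x|) ≤ eVariationOn f (Icc a b) := by
  have ha : a ∈ Icc a b := left_mem_Icc.2 hab
  have hf' : BoundedVariationOn f (uIcc a b) := by rwa [uIcc_of_le hab]
  set p := variationOnFromTo f (Icc a b) a
  have hp : MonotoneOn p (Icc a b) :=
    variationOnFromTo.monotoneOn hf.locallyBoundedVariationOn ha
  have hpf := variationOnFromTo.sub_self_monotoneOn hf.locallyBoundedVariationOn ha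
  have hfp := variationOnFromTo.add_self_monotoneOn hf.locallyBoundedVariationOn ha
  -- `p ± f` are monotone, so `|f'| ≤ p'` wherever both are differentiable
  have hle : ∀ᵐ x ∂volume.restrict (Icc a b), |deriv f x| ≤ deriv p x := by
    rw [← restrict_Ioo_eq_restrict_Icc, ae_restrict_iff' measurableSet_Ioo]
    filter_upwards [hp.ae_differentiableWithinAt_of_mem, hf'.ae_differentiableAt_of_mem_uIcc]
      with x hpx hfx hx
    have hnhds : Icc a b ∈ 𝓝 x := Icc_mem_nhds hx.1 hx.2
    have hxI : x ∈ Icc a b := Ioo_subset_Icc_self hx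
    have hpx := (hpx hxI).differentiableAt hnhds
    have hfx := hfx (by rwa [uIcc_of_le hab])
    have h₁ : 0 ≤ deriv (p - f) x := by
      rw [← derivWithin_of_mem_nhds hnhds]; exact hpf.derivWithin_nonneg
    have h₂ : 0 ≤ deriv (p + f) x := by
      rw [← derivWithin_of_mem_nhds hnhds]; exact hfp.derivWithin_nonneg
    rw [deriv_sub hpx hfx] at h₁
    rw [deriv_add hpx hfx] at h₂
    exact abs_le.2 ⟨by linarith, by linarith⟩
  have hp' : MonotoneOn p (uIcc a b) := by rwa [uIcc_of_le hab]
  calc ENNReal.ofReal (∫ x in a..b, |deriv f x|)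
      ≤ ENNReal.ofReal (∫ x in a..b, deriv p x) := ENNReal.ofReal_le_ofReal <|
        intervalIntegral.integral_mono_ae_restrict hab hf'.intervalIntegrable_deriv.abs
          hp'.intervalIntegrable_deriv hle
    _ ≤ ENNReal.ofReal (p b - p a) := by
        have := hp'.intervalIntegral_deriv_mem_uIcc
        rw [uIcc_of_le (sub_nonneg.2 (hp ha (right_mem_Icc.2 hab) hab))] at this
        exact ENNReal.ofReal_le_ofReal this.2
    _ = eVariationOn f (Icc a b) := by
        rw [show p b - p a = (eVariationOn f (Icc a b)).toReal by
          simp [p, variationOnFromTo.self, variationOnFromTo.eq_of_le _ _ hab],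
          ENNReal.ofReal_toReal hf]

theorem IsPrimitiveOn.ofReal_integral_abs_le_eVariationOn (hF : IsPrimitiveOn F h a b)
    (hab : a ≤ b) : ENNReal.ofReal (∫ x in Icc a b, |h x|) ≤ eVariationOn F (Icc a b) := by
  have ha : a ∈ Icc a b := left_mem_Icc.2 hab
  refine le_of_eq_of_le ?_ ((hF.boundedVariationOn hab).ofReal_integral_abs_deriv_le hab)
  rw [integral_Icc_eq_integral_Ioc, ← intervalIntegral.integral_of_le hab]
  congr 1
  refine intervalIntegral.integral_congr_ae ?_
  have hb : ∀ᵐ x : ℝ, x ≠ b := by simp [ae_iff, measure_singleton]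
  filter_upwards [(hF.intervalIntegrable ha (right_mem_Icc.2 hab)).ae_hasDerivAt_integral, hb]
    with x hx hxb hxI
  rw [uIoc_of_le hab] at hxI
  have hxI' : x ∈ Ioo a b := ⟨hxI.1, lt_of_le_of_ne hxI.2 hxb⟩
  have hderiv := ((hx (by rw [uIcc_of_le hab]; exact Ioc_subset_Icc_self hxI) a
    (by rw [uIcc_of_le hab]; exact ha)).const_add (F a)).congr_of_eventuallyEq
    (eventually_of_mem (Icc_mem_nhds hxI'.1 hxI'.2) hF.2)
  rw [hderiv.deriv]

end Primitive

def HasBVDerivsOn : ℕ → (ℝ → ℝ) → Set ℝ → Prop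
  | 0, w, s => BoundedVariationOn w s
  | r + 1, w, s => BoundedVariationOn w s ∧ DifferentiableOn ℝ w s ∧
      HasBVDerivsOn r (derivWithin w s) s

namespace HasBVDerivsOn

variable {r : ℕ} {u v : ℝ → ℝ} {s : Set ℝ}

theorem boundedVariationOn (h : HasBVDerivsOn r u s) : BoundedVariationOn u s := by
  cases r with
  | zero => exact h
  | succ r => exact h.1

theorem differentiableOn (h : HasBVDerivsOn (r + 1) u s) : DifferentiableOn ℝ u s := h.2.1

theorem derivWithin (h : HasBVDerivsOn (r + 1) u s) : HasBVDerivsOn r (derivWithin u s) s :=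
  h.2.2

theorem of_succ (h : HasBVDerivsOn (r + 1) u s) : HasBVDerivsOn r u s := by
  induction r generalizing u with
  | zero => exact h.1
  | succ r ih => exact ⟨h.1, h.2.1, ih h.2.2⟩

theorem mono {r' : ℕ} (h : HasBVDerivsOn r u s) (hr : r' ≤ r) : HasBVDerivsOn r' u s := by
  induction r, hr using Nat.le_induction with
  | base => exact h
  | succ r _ ih => exact ih h.of_succ

theorem congr (h : HasBVDerivsOn r u s) (huv : EqOn u v s) : HasBVDerivsOn r v s := by
  induction r generalizing u v with
  | zero => exact BoundedVariationOn.congr h huv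
  | succ r ih =>
    exact ⟨h.boundedVariationOn.congr huv, h.differentiableOn.congr huv.symm,
      ih h.derivWithin fun x hx => derivWithin_congr huv.symm (huv hx).symm |>.symm⟩

theorem const (r : ℕ) (c : ℝ) (s : Set ℝ) : HasBVDerivsOn r (fun _ => c) s := by
  induction r generalizing c with
  | zero => exact boundedVariationOn_const c s
  | succ r ih =>
    exact ⟨boundedVariationOn_const c s, differentiableOn_const c,
      derivWithin_fun_const s c ▸ ih 0⟩

theorem add (hu : HasBVDerivsOn r u s) (hv : HasBVDerivsOn r v s) :
    HasBVDerivsOn r (fun x => u x + v x) s := by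
  induction r generalizing u v with
  | zero => exact BoundedVariationOn.add hu hv
  | succ r ih =>
    refine ⟨hu.boundedVariationOn.add hv.boundedVariationOn,
      hu.differentiableOn.add hv.differentiableOn,
      (ih hu.derivWithin hv.derivWithin).congr fun x hx => ?_⟩
    exact (derivWithin_fun_add (hu.differentiableOn x hx) (hv.differentiableOn x hx)).symm

theorem mul (hu : HasBVDerivsOn r u s) (hv : HasBVDerivsOn r v s) :
    HasBVDerivsOn r (fun x => u x * v x) s := by
  induction r generalizing u v with
  | zero => exact BoundedVariationOn.fun_mul hu hv
  | succ r ih =>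
    refine ⟨hu.boundedVariationOn.fun_mul hv.boundedVariationOn,
      hu.differentiableOn.mul hv.differentiableOn,
      ((ih hu.derivWithin hv.of_succ).add (ih hu.of_succ hv.derivWithin)).congr fun x hx => ?_⟩
    exact (derivWithin_fun_mul (hu.differentiableOn x hx) (hv.differentiableOn x hx)).symm

end HasBVDerivsOn

theorem ContDiffOn.boundedVariationOn_Icc {f : ℝ → ℝ} {a b : ℝ} (hab : a ≤ b)
    (hf : ContDiffOn ℝ 1 f (Icc a b)) : BoundedVariationOn f (Icc a b) := by
  rw [← uIcc_of_le hab] at hf ⊢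
  exact hf.absolutelyContinuousOnInterval.boundedVariationOn

theorem ContDiffOn.hasBVDerivsOn_iteratedDerivWithin {F : ℝ → ℝ} {k i : ℕ} {a b : ℝ}
    (hab : a < b) (hF : ContDiffOn ℝ k F (Icc a b))
    (hFk : BoundedVariationOn (iteratedDerivWithin k F (Icc a b)) (Icc a b)) (hi : i ≤ k) :
    HasBVDerivsOn (k - i) (iteratedDerivWithin i F (Icc a b)) (Icc a b) := by
  suffices ∀ r i, i + r = k → HasBVDerivsOn r (iteratedDerivWithin i F (Icc a b)) (Icc a b) from
    this _ _ (Nat.add_sub_cancel' hi)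
  intro r
  induction r with
  | zero => rintro i rfl; exact hFk
  | succ r ih =>
    intro i hik
    have hC1 : ContDiffOn ℝ 1 (iteratedDerivWithin i F (Icc a b)) (Icc a b) :=
      ((contDiffOn_nat_succ_iff_contDiffOn_one_iteratedDerivWithin (uniqueDiffOn_Icc hab)).1
        (hF.of_le (by norm_cast; omega))).2
    refine ⟨hC1.boundedVariationOn_Icc hab.le, hC1.differentiableOn one_ne_zero, ?_⟩
    rw [← iteratedDerivWithin_succ]
    exact ih (i + 1) (by omega)

def faaDiBrunoCoeff (g : ℝ → ℝ) (s : Set ℝ) : ℕ → ℕ → ℝ → ℝ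
  | 0, 0 => fun _ => 1
  | 0, _ + 1 => fun _ => 0
  | m + 1, 0 => derivWithin (faaDiBrunoCoeff g s m 0) s
  | m + 1, j + 1 => fun x =>
      derivWithin (faaDiBrunoCoeff g s m (j + 1)) s x +
        faaDiBrunoCoeff g s m j x * derivWithin g s x

section FaaDiBruno

variable {g : ℝ → ℝ} {s : Set ℝ}

theorem faaDiBrunoCoeff_of_lt {m j : ℕ} (h : m < j) : faaDiBrunoCoeff g s m j = 0 := by
  induction m generalizing j with
  | zero => obtain ⟨j, rfl⟩ := Nat.exists_eq_add_one_of_ne_zero h.ne'; rfl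
  | succ m ih =>
    obtain ⟨j, rfl⟩ := Nat.exists_eq_add_one_of_ne_zero (Nat.ne_zero_of_lt h)
    ext x
    have h' : m < j := Nat.succ_lt_succ_iff.1 h
    simp [faaDiBrunoCoeff, ih h', ih (h'.trans (Nat.lt_succ_self j))]

theorem contDiffOn_faaDiBrunoCoeff (hs : UniqueDiffOn ℝ s) {m n : ℕ}
    (hg : ContDiffOn ℝ (m + n : ℕ) g s) (j : ℕ) :
    ContDiffOn ℝ n (faaDiBrunoCoeff g s m j) s := by
  induction m generalizing j n with
  | zero => cases j <;> exact contDiffOn_const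
  | succ m ih =>
    have hd : ∀ j, ContDiffOn ℝ n (derivWithin (faaDiBrunoCoeff g s m j) s) s := fun j =>
      (ih (n := n + 1) (by rwa [← add_assoc, add_right_comm]) j).derivWithin hs (by norm_cast)
    cases j with
    | zero => exact hd 0
    | succ j =>
      refine (hd (j + 1)).add ((ih (hg.of_le (by norm_cast; omega)) j).mul ?_)
      exact (hg.derivWithin hs (by norm_cast; omega))

theorem hasBVDerivsOn_faaDiBrunoCoeff {k m : ℕ} {a b : ℝ} (hab : a < b)
    (hg : ContDiffOn ℝ k g (Icc a b))
    (hgk : BoundedVariationOn (iteratedDerivWithin k g (Icc a b)) (Icc a b)) (hm : m ≤ k)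
    (j : ℕ) :
    HasBVDerivsOn (k - m) (faaDiBrunoCoeff g (Icc a b) m j) (Icc a b) := by
  induction m generalizing j with
  | zero => cases j <;> exact HasBVDerivsOn.const _ _ _
  | succ m ih =>
    have hd : ∀ j, HasBVDerivsOn (k - (m + 1)) (derivWithin (faaDiBrunoCoeff g (Icc a b) m j)
        (Icc a b)) (Icc a b) := fun j =>
      (show k - m = k - (m + 1) + 1 by omega) ▸ ih (by omega) j |>.derivWithin
    cases j with
    | zero => exact hd 0
    | succ j =>
      have hg' := hg.hasBVDerivsOn_iteratedDerivWithin hab hgk (i := 1) (by omega)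
      rw [iteratedDerivWithin_one] at hg'
      exact (hd (j + 1)).add (((ih (by omega) j).mono (by omega)).mul (hg'.mono (by omega)))

theorem iteratedDerivWithin_comp_eq_sum {F : ℝ → ℝ} {t : Set ℝ} {m : ℕ}
    (hs : UniqueDiffOn ℝ s) (ht : UniqueDiffOn ℝ t) (hF : ContDiffOn ℝ m F t)
    (hg : ContDiffOn ℝ m g s) (hgst : MapsTo g s t) {x : ℝ} (hx : x ∈ s) :
    iteratedDerivWithin m (F ∘ g) s x =
      ∑ j ∈ Finset.range (m + 1),
        iteratedDerivWithin j F t (g x) * faaDiBrunoCoeff g s m j x := by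
  induction m generalizing x with
  | zero => simp [faaDiBrunoCoeff]
  | succ m ih =>
    have hA : ∀ j < m + 1, HasDerivWithinAt (fun y => iteratedDerivWithin j F t (g y))
        (iteratedDerivWithin (j + 1) F t (g x) * derivWithin g s x) s x := by
      intro j hj
      have hFj := (hF.differentiableOn_iteratedDerivWithin (by norm_cast) ht (g x)
        (hgst hx)).hasDerivWithinAt
      rw [← iteratedDerivWithin_succ] at hFj
      exact hFj.comp x ((hg.differentiableOn (by norm_num) x hx).hasDerivWithinAt) hgst
    have hc : ∀ j, HasDerivWithinAt (faaDiBrunoCoeff g s m j)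
        (derivWithin (faaDiBrunoCoeff g s m j) s x) s x := fun j =>
      ((contDiffOn_faaDiBrunoCoeff hs (n := 1) hg j).differentiableOn one_ne_zero x
        hx).hasDerivWithinAt
    have hsum := HasDerivWithinAt.fun_sum (u := Finset.range (m + 1)) fun j hj =>
      (hA j (Finset.mem_range.1 hj)).fun_mul (hc j)
    rw [iteratedDerivWithin_succ, derivWithin_congr (fun y hy => ih hF.of_succ hg.of_succ hy)
      (ih hF.of_succ hg.of_succ hx), hsum.derivWithin (hs x hx)]
    set D : ℕ → ℝ := fun i => iteratedDerivWithin i F t (g x) *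
      derivWithin (faaDiBrunoCoeff g s m i) s x
    have hD : ∑ i ∈ Finset.range (m + 1), D i =
        ∑ i ∈ Finset.range (m + 1), D (i + 1) + D 0 := by
      have hlast : D (m + 1) = 0 := by
        simp [D, faaDiBrunoCoeff_of_lt (Nat.lt_succ_self m)]
      rw [← Finset.sum_range_succ' D (m + 1), Finset.sum_range_succ D (m + 1), hlast,
        add_zero]
    rw [Finset.sum_add_distrib, hD, Finset.sum_range_succ' _ (m + 1)]
    simp only [D, faaDiBrunoCoeff, mul_add, Finset.sum_add_distrib, mul_assoc,
      mul_comm (derivWithin g s x)]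
    ring

end FaaDiBruno

namespace DiffkAC

variable {k : ℕ}

theorem strictMonoOn (g : DiffkAC k) : StrictMonoOn g.toFun (Icc 0 1) :=
  strictMonoOn_of_deriv_pos (convex_Icc 0 1) g.contDiff.continuousOn fun x hx => by
    rw [interior_Icc] at hx
    rw [← derivWithin_of_mem_nhds (Icc_mem_nhds hx.1 hx.2)]
    exact g.derivPos x (Ioo_subset_Icc_self hx)

theorem mapsTo (g : DiffkAC k) : MapsTo g.toFun (Icc 0 1) (Icc 0 1) := fun _ hx =>
  ⟨g.map0 ▸ g.strictMonoOn.monotoneOn (left_mem_Icc.2 zero_le_one) hx hx.1,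
    g.map1 ▸ g.strictMonoOn.monotoneOn hx (right_mem_Icc.2 zero_le_one) hx.2⟩

theorem image_eq (g : DiffkAC k) : g.toFun '' Icc 0 1 = Icc 0 1 := by
  refine g.mapsTo.image_subset.antisymm ?_
  simpa [g.map0, g.map1] using intermediate_value_Icc zero_le_one g.contDiff.continuousOn

theorem eVariationOn_comp (g : DiffkAC k) (φ : ℝ → ℝ) :
    eVariationOn (fun x => φ (g.toFun x)) (Icc 0 1) = eVariationOn φ (Icc 0 1) :=
  (eVariationOn.comp_eq_of_monotoneOn φ g.toFun g.strictMonoOn.monotoneOn).trans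
    (by rw [g.image_eq])

theorem boundedVariationOn_iteratedDerivWithin (f : DiffkAC k) :
    BoundedVariationOn (iteratedDerivWithin k f.toFun (Icc 0 1)) (Icc 0 1) :=
  let ⟨_, hf⟩ := f.ac
  IsPrimitiveOn.boundedVariationOn hf zero_le_one

theorem abs_sub_iteratedDerivWithin_le_dCk (f₁ f₂ : DiffkAC k) {j : ℕ} (hj : j ≤ k) {y : ℝ}
    (hy : y ∈ Icc 0 1) :
    |iteratedDerivWithin j f₁.toFun (Icc 0 1) y - iteratedDerivWithin j f₂.toFun (Icc 0 1) y|
      ≤ dCk k f₁ f₂ := by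
  set Δ : ℕ → ℝ → ℝ := fun i x =>
    |iteratedDerivWithin i f₁.toFun (Icc 0 1) x - iteratedDerivWithin i f₂.toFun (Icc 0 1) x|
  set T : ℕ → ℝ := fun i => ⨆ x : Icc (0:ℝ) 1, Δ i x
  have hT : ∀ i, 0 ≤ T i := fun i => Real.iSup_nonneg fun _ => abs_nonneg _
  have hdCk : dCk k f₁ f₂ = T 0 + ∑ i ∈ Finset.Icc 1 k, T i := by
    simp only [dCk, T, Δ, iteratedDerivWithin_zero]
  have hs := uniqueDiffOn_Icc (zero_lt_one' ℝ)
  have hcont : ContinuousOn (Δ j) (Icc 0 1) :=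
    ((f₁.contDiff.continuousOn_iteratedDerivWithin (by exact_mod_cast hj) hs).sub
      (f₂.contDiff.continuousOn_iteratedDerivWithin (by exact_mod_cast hj) hs)).abs
  have hy' : Δ j y ≤ T j := le_ciSup ((isCompact_Icc.bddAbove_image hcont).mono
    (range_subset_iff.2 fun x : Icc (0:ℝ) 1 => mem_image_of_mem _ x.2)) ⟨y, hy⟩
  rw [hdCk]
  rcases Nat.eq_zero_or_pos j with rfl | hj₀
  · linarith [Finset.sum_nonneg fun i (_ : i ∈ Finset.Icc 1 k) => hT i]
  · linarith [Finset.single_le_sum (fun i _ => hT i) (Finset.mem_Icc.2 ⟨hj₀, hj⟩), hT 0]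

theorem dCk_nonneg (f₁ f₂ : DiffkAC k) : 0 ≤ dCk k f₁ f₂ :=
  (abs_nonneg _).trans
    (abs_sub_iteratedDerivWithin_le_dCk f₁ f₂ (Nat.zero_le k) (left_mem_Icc.2 zero_le_one))

theorem eVariationOn_sub_iteratedDerivWithin_le (f₁ f₂ : DiffkAC k) {G₁ G₂ : ℝ → ℝ}
    (hG₁ : IsPrimitiveOn (iteratedDerivWithin k f₁.toFun (Icc 0 1)) G₁ 0 1)
    (hG₂ : IsPrimitiveOn (iteratedDerivWithin k f₂.toFun (Icc 0 1)) G₂ 0 1) {j : ℕ}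
    (hj : j ≤ k) :
    eVariationOn (fun y => iteratedDerivWithin j f₁.toFun (Icc 0 1) y -
        iteratedDerivWithin j f₂.toFun (Icc 0 1) y) (Icc 0 1)
      ≤ ENNReal.ofReal (dCk k f₁ f₂ + ∫ x in Icc (0:ℝ) 1, |G₁ x - G₂ x|) := by
  have hG : 0 ≤ ∫ x in Icc (0:ℝ) 1, |G₁ x - G₂ x| := integral_nonneg fun _ => abs_nonneg _
  rcases hj.lt_or_eq with hj | rfl
  · have hs := uniqueDiffOn_Icc (zero_lt_one' ℝ)
    have hd₁ := f₁.contDiff.differentiableOn_iteratedDerivWithin (by exact_mod_cast hj) hs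
    have hd₂ := f₂.contDiff.differentiableOn_iteratedDerivWithin (by exact_mod_cast hj) hs
    refine (eVariationOn_Icc_le_of_abs_derivWithin_le zero_le_one (hd₁.sub hd₂)
      fun y hy => ?_).trans (ENNReal.ofReal_le_ofReal (by linarith))
    rw [derivWithin_sub (hd₁ y hy) (hd₂ y hy), ← iteratedDerivWithin_succ,
      ← iteratedDerivWithin_succ]
    exact f₁.abs_sub_iteratedDerivWithin_le_dCk f₂ hj hy
  · exact ((hG₁.sub hG₂).eVariationOn_le zero_le_one).trans
      (ENNReal.ofReal_le_ofReal (by linarith [f₁.dCk_nonneg f₂]))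

def faaDiBrunoBound (g : DiffkAC k) : ℝ≥0∞ :=
  ∑ j ∈ Finset.range (k + 1), (‖faaDiBrunoCoeff g.toFun (Icc 0 1) k j 0‖ₑ +
    2 * eVariationOn (faaDiBrunoCoeff g.toFun (Icc 0 1) k j) (Icc 0 1))

theorem faaDiBrunoBound_ne_top (g : DiffkAC k) : g.faaDiBrunoBound ≠ ⊤ := by
  refine ENNReal.sum_ne_top.2 fun j _ => ENNReal.add_ne_top.2 ⟨enorm_ne_top, ?_⟩
  exact ENNReal.mul_ne_top ENNReal.ofNat_ne_top (hasBVDerivsOn_faaDiBrunoCoeff zero_lt_one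
    g.contDiff g.boundedVariationOn_iteratedDerivWithin le_rfl j).boundedVariationOn

theorem eVariationOn_sub_iteratedDerivWithin_comp_le (f₁ f₂ g : DiffkAC k) {G₁ G₂ : ℝ → ℝ}
    (hG₁ : IsPrimitiveOn (iteratedDerivWithin k f₁.toFun (Icc 0 1)) G₁ 0 1)
    (hG₂ : IsPrimitiveOn (iteratedDerivWithin k f₂.toFun (Icc 0 1)) G₂ 0 1) :
    eVariationOn (fun x => iteratedDerivWithin k (f₁.toFun ∘ g.toFun) (Icc 0 1) x -
        iteratedDerivWithin k (f₂.toFun ∘ g.toFun) (Icc 0 1) x) (Icc 0 1)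
      ≤ ENNReal.ofReal (dCk k f₁ f₂ + ∫ x in Icc (0:ℝ) 1, |G₁ x - G₂ x|) * g.faaDiBrunoBound := by
  set a := faaDiBrunoCoeff g.toFun (Icc 0 1) k
  set Δ : ℕ → ℝ → ℝ := fun j y =>
    iteratedDerivWithin j f₁.toFun (Icc 0 1) y - iteratedDerivWithin j f₂.toFun (Icc 0 1) y
  have hs := uniqueDiffOn_Icc (zero_lt_one' ℝ)
  have hcomp : ∀ F : DiffkAC k, ∀ x ∈ Icc (0:ℝ) 1,
      iteratedDerivWithin k (F.toFun ∘ g.toFun) (Icc 0 1) x =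
        ∑ j ∈ Finset.range (k + 1), iteratedDerivWithin j F.toFun (Icc 0 1) (g.toFun x) * a j x :=
    fun F x hx => iteratedDerivWithin_comp_eq_sum hs hs F.contDiff g.contDiff g.mapsTo hx
  calc _ = eVariationOn (fun x => ∑ j ∈ Finset.range (k + 1), Δ j (g.toFun x) * a j x)
          (Icc 0 1) :=
        eVariationOn.eq_of_eqOn fun x hx => by
          simp only [Δ, hcomp _ x hx, sub_mul, Finset.sum_sub_distrib]
    _ ≤ ∑ j ∈ Finset.range (k + 1), eVariationOn (fun x => Δ j (g.toFun x) * a j x) (Icc 0 1) :=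
        eVariationOn_sum_le _ _ _
    _ ≤ _ := by
        rw [faaDiBrunoBound, Finset.mul_sum]
        refine Finset.sum_le_sum fun j hj => eVariationOn_mul_le_of_enorm_le
          (left_mem_Icc.2 zero_le_one) (fun x hx => ?_) ?_
        · rw [Real.enorm_eq_ofReal_abs]
          exact ENNReal.ofReal_le_ofReal ((f₁.abs_sub_iteratedDerivWithin_le_dCk f₂
            (Finset.mem_range_succ_iff.1 hj) (g.mapsTo hx)).trans
            (le_add_of_nonneg_right (integral_nonneg fun _ => abs_nonneg _)))
        · rw [g.eVariationOn_comp (Δ j)]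
          exact f₁.eVariationOn_sub_iteratedDerivWithin_le f₂ hG₁ hG₂
            (Finset.mem_range_succ_iff.1 hj)

theorem integral_abs_sub_le_of_isPrimitiveOn_comp (f₁ f₂ g : DiffkAC k) {G₁ G₂ H₁ H₂ : ℝ → ℝ}
    (hG₁ : IsPrimitiveOn (iteratedDerivWithin k f₁.toFun (Icc 0 1)) G₁ 0 1)
    (hG₂ : IsPrimitiveOn (iteratedDerivWithin k f₂.toFun (Icc 0 1)) G₂ 0 1)
    (hH₁ : IsPrimitiveOn (iteratedDerivWithin k (f₁.toFun ∘ g.toFun) (Icc 0 1)) H₁ 0 1)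
    (hH₂ : IsPrimitiveOn (iteratedDerivWithin k (f₂.toFun ∘ g.toFun) (Icc 0 1)) H₂ 0 1) :
    ∫ x in Icc (0:ℝ) 1, |H₁ x - H₂ x|
      ≤ (dCk k f₁ f₂ + ∫ x in Icc (0:ℝ) 1, |G₁ x - G₂ x|) * g.faaDiBrunoBound.toReal := by
  have hε : 0 ≤ dCk k f₁ f₂ + ∫ x in Icc (0:ℝ) 1, |G₁ x - G₂ x| :=
    add_nonneg (f₁.dCk_nonneg f₂) (integral_nonneg fun _ => abs_nonneg _)
  have h := ((hH₁.sub hH₂).ofReal_integral_abs_le_eVariationOn zero_le_one).trans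
    (f₁.eVariationOn_sub_iteratedDerivWithin_comp_le f₂ g hG₁ hG₂)
  rw [← ENNReal.ofReal_toReal g.faaDiBrunoBound_ne_top, ← ENNReal.ofReal_mul hε] at h
  exact (ENNReal.ofReal_le_ofReal_iff (by positivity)).1 h

end DiffkAC

theorem right_multiplication_continuous_general (k : ℕ)
    (f : ℕ → DiffkAC k) (f₀ : DiffkAC k) (g : DiffkAC k)
    (c : ℕ → DiffkAC k) (c₀ : DiffkAC k)
    (hc : ∀ n, (c n).toFun = (f n).toFun ∘ g.toFun)
    (hc₀ : c₀.toFun = f₀.toFun ∘ g.toFun)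
    (G : ℕ → ℝ → ℝ) (G₀ : ℝ → ℝ)
    (hG : ∀ n, IntegrableOn (G n) (Icc 0 1) ∧ ∀ x ∈ Icc (0:ℝ) 1,
      iteratedDerivWithin k (f n).toFun (Icc 0 1) x
        = iteratedDerivWithin k (f n).toFun (Icc 0 1) 0 + ∫ t in (0:ℝ)..x, G n t)
    (hG₀ : IntegrableOn G₀ (Icc 0 1) ∧ ∀ x ∈ Icc (0:ℝ) 1,
      iteratedDerivWithin k f₀.toFun (Icc 0 1) x
        = iteratedDerivWithin k f₀.toFun (Icc 0 1) 0 + ∫ t in (0:ℝ)..x, G₀ t)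
    (H : ℕ → ℝ → ℝ) (H₀ : ℝ → ℝ)
    (hH : ∀ n, IntegrableOn (H n) (Icc 0 1) ∧ ∀ x ∈ Icc (0:ℝ) 1,
      iteratedDerivWithin k (c n).toFun (Icc 0 1) x
        = iteratedDerivWithin k (c n).toFun (Icc 0 1) 0 + ∫ t in (0:ℝ)..x, H n t)
    (hH₀ : IntegrableOn H₀ (Icc 0 1) ∧ ∀ x ∈ Icc (0:ℝ) 1,
      iteratedDerivWithin k c₀.toFun (Icc 0 1) x
        = iteratedDerivWithin k c₀.toFun (Icc 0 1) 0 + ∫ t in (0:ℝ)..x, H₀ t)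
    (hCk : Tendsto (fun n => dCk k (f n) f₀) atTop (𝓝 0))
    (hL1 : Tendsto (fun n => ∫ x in Icc (0:ℝ) 1, |G n x - G₀ x|) atTop (𝓝 0)) :
    Tendsto (fun n => ∫ x in Icc (0:ℝ) 1, |H n x - H₀ x|) atTop (𝓝 0) := by
  refine squeeze_zero (fun n => integral_nonneg fun _ => abs_nonneg _) (fun n => ?_)
    (by simpa using (hCk.add hL1).mul_const g.faaDiBrunoBound.toReal)
  exact (f n).integral_abs_sub_le_of_isPrimitiveOn_comp f₀ g (hG n) hG₀ (hc n ▸ hH n) (hc₀ ▸ hH₀)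

/-- Right multiplication by a fixed `g` is continuous: if `d_{C^k}(fₙ,f₀) → 0` and
`fₙ^{(k+1)} → f₀^{(k+1)}` in `L¹`, then `(fₙ ∘ g)^{(k+1)} → (f₀ ∘ g)^{(k+1)}` in `L¹`.
Here `G n`, `G₀` are a.e. `(k+1)`-st derivative witnesses for `fₙ`, `f₀`, and
`H n`, `H₀` for the composites `fₙ ∘ g`, `f₀ ∘ g`. -/
theorem right_multiplication_continuous (k : ℕ) (hk : 1 ≤ k)
    (f : ℕ → DiffkAC k) (f₀ : DiffkAC k) (g : DiffkAC k)
    (c : ℕ → DiffkAC k) (c₀ : DiffkAC k)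
    (hc : ∀ n, (c n).toFun = (f n).toFun ∘ g.toFun)
    (hc₀ : c₀.toFun = f₀.toFun ∘ g.toFun)
    (G : ℕ → ℝ → ℝ) (G₀ : ℝ → ℝ)
    (hG : ∀ n, IntegrableOn (G n) (Icc 0 1) ∧ ∀ x ∈ Icc (0:ℝ) 1,
      iteratedDerivWithin k (f n).toFun (Icc 0 1) x
        = iteratedDerivWithin k (f n).toFun (Icc 0 1) 0 + ∫ t in (0:ℝ)..x, G n t)
    (hG₀ : IntegrableOn G₀ (Icc 0 1) ∧ ∀ x ∈ Icc (0:ℝ) 1,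
      iteratedDerivWithin k f₀.toFun (Icc 0 1) x
        = iteratedDerivWithin k f₀.toFun (Icc 0 1) 0 + ∫ t in (0:ℝ)..x, G₀ t)
    (H : ℕ → ℝ → ℝ) (H₀ : ℝ → ℝ)
    (hH : ∀ n, IntegrableOn (H n) (Icc 0 1) ∧ ∀ x ∈ Icc (0:ℝ) 1,
      iteratedDerivWithin k (c n).toFun (Icc 0 1) x
        = iteratedDerivWithin k (c n).toFun (Icc 0 1) 0 + ∫ t in (0:ℝ)..x, H n t)
    (hH₀ : IntegrableOn H₀ (Icc 0 1) ∧ ∀ x ∈ Icc (0:ℝ) 1,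
      iteratedDerivWithin k c₀.toFun (Icc 0 1) x
        = iteratedDerivWithin k c₀.toFun (Icc 0 1) 0 + ∫ t in (0:ℝ)..x, H₀ t)
    (hCk : Tendsto (fun n => dCk k (f n) f₀) atTop (𝓝 0))
    (hL1 : Tendsto (fun n => ∫ x in Icc (0:ℝ) 1, |G n x - G₀ x|) atTop (𝓝 0)) :
    Tendsto (fun n => ∫ x in Icc (0:ℝ) 1, |H n x - H₀ x|) atTop (𝓝 0) :=
  right_multiplication_continuous_general k f f₀ g c c₀ hc hc₀ G G₀ hG hG₀ H H₀ hH hH₀ hCk hL1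
end
end

section
/- There exists an uncountable family {F_h : h ∈ J} of continuous functions of bounded variation on [0,1], indexed by an interval J of positive length, such that each F_h has total variation exactly r, F_h(0) = F_h(1) = 0, and V(F_{h₁} − F_{h₂}) = 2r for all distinct h₁, h₂ ∈ J, for any prescribed r > 0. -/
/-!
For `h ∈ [0,1)` let `K_h ⊆ [0,1]` be the set of ternary numbers with digits in `{0, 2}` whose
even-indexed digits are the doubled binary digits of `h`; the odd-indexed digits are free and
are labelled by the binary digits of `u ∈ [0,1)`. Two such numbers whose digit strings first
differ at position `n` are at least `3^{-(n+1)}` apart, so the sets `K_h` are pairwise at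
positive distance, and the labelling `u ↦ K_h` has a uniformly continuous inverse. Hence
`G_h(x) = |{u ∈ [0,1) : (point of K_h labelled u) < x}|` is a continuous staircase rising from
`0` to `1` on `[0,1]` and constant off `K_h`. Two staircases `G_h`, `G_{h'}` never both increase
on an interval shorter than `dist(K_h, K_{h'})`, so on a fine partition the increments of
`G_h - G_{h'}` do not cancel and its variation is `1 + 1`. For `h ∈ [0, 1/4]` put
`F_h = (r/2)(G_h - G_{h+1/2})`; then `F_{h₁} - F_{h₂} = (r/2)((G_{h₁} + G_{h₂+1/2}) -
(G_{h₂} + G_{h₁+1/2}))` is again a difference of two non-interfering monotone functions, each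
rising by `2`, so its variation is `2r`.
-/

open MeasureTheory Set Filter Topology

section Variation

variable {α E : Type*} [LinearOrder α] [SeminormedAddCommGroup E]

theorem eVariationOn_sub_le (f g : α → E) (s : Set α) :
    eVariationOn (f - g) s ≤ eVariationOn f s + eVariationOn g s := by
  refine iSup_le fun ⟨n, u, hu, us⟩ => ?_
  have hedist (a b c d : E) : edist (a - b) (c - d) ≤ edist a c + edist b d := by
    rw [edist_dist, edist_dist, edist_dist, ← ENNReal.ofReal_add dist_nonneg dist_nonneg]
    exact ENNReal.ofReal_le_ofReal (dist_sub_sub_le a b c d)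
  calc ∑ i ∈ Finset.range n, edist ((f - g) (u (i + 1))) ((f - g) (u i))
      ≤ ∑ i ∈ Finset.range n,
          (edist (f (u (i + 1))) (f (u i)) + edist (g (u (i + 1))) (g (u i))) :=
        Finset.sum_le_sum fun i _ => hedist _ _ _ _
    _ = _ := Finset.sum_add_distrib
    _ ≤ _ := add_le_add (eVariationOn.sum_le hu us) (eVariationOn.sum_le hu us)

theorem eVariationOn_const_smul {𝕜 : Type*} [NormedField 𝕜] [NormedSpace 𝕜 E] (c : 𝕜)
    (f : α → E) (s : Set α) : eVariationOn (c • f) s = ‖c‖ₑ * eVariationOn f s := by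
  simp only [eVariationOn, ENNReal.mul_iSup, Finset.mul_sum, Pi.smul_apply, edist_smul₀]
  rfl

end Variation

theorem exists_uniform_partition_Icc {a b δ : ℝ} (hab : a ≤ b) (hδ : 0 < δ) :
    ∃ (N : ℕ) (u : ℕ → ℝ), Monotone u ∧ u 0 = a ∧ u N = b ∧
      (∀ i ∈ Icc 0 N, u i ∈ Icc a b) ∧ ∀ i, u (i + 1) - u i < δ := by
  obtain ⟨N, hN⟩ := exists_nat_gt ((b - a) / δ)
  have hNpos : (0 : ℝ) < N := lt_of_le_of_lt (div_nonneg (sub_nonneg.2 hab) hδ.le) hN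
  refine ⟨N, fun i => a + i * ((b - a) / N), fun i j hij => by dsimp only; gcongr, by simp,
    by simp [mul_div_cancel₀ _ hNpos.ne'], fun i hi => ⟨by simp; positivity, ?_⟩, fun i => ?_⟩
  · have : (i : ℝ) * ((b - a) / N) ≤ N * ((b - a) / N) := by
      gcongr; exact_mod_cast hi.2
    rw [mul_div_cancel₀ _ hNpos.ne'] at this
    linarith
  · rw [div_lt_iff₀ hδ] at hN
    dsimp only
    rw [Nat.cast_succ, add_mul, one_mul, add_sub_add_left_eq_sub, add_sub_cancel_left,
      div_lt_iff₀ hNpos]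
    linarith

def IncrementsApart (f g : ℝ → ℝ) : Prop :=
  ∃ δ > 0, ∀ p q, p ≤ q → q - p < δ → f p = f q ∨ g p = g q

theorem abs_sub_sub_sub_eq_of_eq_or_eq {x x' y y' : ℝ} (hx : x ≤ x') (hy : y ≤ y')
    (h : x = x' ∨ y = y') : |(x' - y') - (x - y)| = (x' + y') - (x + y) := by
  rcases h with rfl | rfl
  · rw [abs_of_nonpos (by linarith)]; ring
  · rw [abs_of_nonneg (by linarith)]; ring

namespace IncrementsApart

variable {f g f₁ f₂ g₁ g₂ : ℝ → ℝ} {a b : ℝ}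

theorem add (h₁₁ : IncrementsApart f₁ g₁) (h₁₂ : IncrementsApart f₁ g₂)
    (h₂₁ : IncrementsApart f₂ g₁) (h₂₂ : IncrementsApart f₂ g₂) :
    IncrementsApart (f₁ + f₂) (g₁ + g₂) := by
  obtain ⟨δ₁₁, hδ₁₁, h₁₁⟩ := h₁₁
  obtain ⟨δ₁₂, hδ₁₂, h₁₂⟩ := h₁₂
  obtain ⟨δ₂₁, hδ₂₁, h₂₁⟩ := h₂₁
  obtain ⟨δ₂₂, hδ₂₂, h₂₂⟩ := h₂₂
  refine ⟨min (min δ₁₁ δ₁₂) (min δ₂₁ δ₂₂), by positivity, fun p q hpq hδ => ?_⟩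
  simp only [lt_min_iff] at hδ
  have := h₁₁ p q hpq hδ.1.1
  have := h₁₂ p q hpq hδ.1.2
  have := h₂₁ p q hpq hδ.2.1
  have := h₂₂ p q hpq hδ.2.2
  simp only [Pi.add_apply]
  grind

-- On a partition finer than the separation scale at most one of `f`, `g` moves on each step,
-- so the increments of `f - g` add up to those of `f + g`.
theorem ofReal_le_eVariationOn_sub (hfg : IncrementsApart f g) (hab : a ≤ b)
    (hf : MonotoneOn f (Icc a b)) (hg : MonotoneOn g (Icc a b)) :
    ENNReal.ofReal (f b + g b - (f a + g a)) ≤ eVariationOn (f - g) (Icc a b) := by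
  obtain ⟨δ, hδ, hapart⟩ := hfg
  obtain ⟨N, u, hu, hu0, huN, hu_mem, hmesh⟩ := exists_uniform_partition_Icc hab hδ
  have hstep : ∀ i < N, f (u i) ≤ f (u (i + 1)) ∧ g (u i) ≤ g (u (i + 1)) ∧
      (f (u i) = f (u (i + 1)) ∨ g (u i) = g (u (i + 1))) := by
    intro i hi
    have hi₀ := hu_mem i ⟨i.zero_le, hi.le⟩
    have hi₁ := hu_mem (i + 1) ⟨(i + 1).zero_le, hi⟩
    have hle : u i ≤ u (i + 1) := hu i.le_succ
    exact ⟨hf hi₀ hi₁ hle, hg hi₀ hi₁ hle, hapart _ _ hle (hmesh i)⟩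
  calc ENNReal.ofReal (f b + g b - (f a + g a))
      = ENNReal.ofReal (∑ i ∈ Finset.range N,
          ((f (u (i + 1)) + g (u (i + 1))) - (f (u i) + g (u i)))) := by
        rw [Finset.sum_range_sub (fun i => f (u i) + g (u i)), hu0, huN]
    _ = ∑ i ∈ Finset.range N,
          ENNReal.ofReal ((f (u (i + 1)) + g (u (i + 1))) - (f (u i) + g (u i))) :=
        ENNReal.ofReal_sum_of_nonneg fun i hi => by
          obtain ⟨hfi, hgi, -⟩ := hstep i (Finset.mem_range.1 hi)
          linarith
    _ = ∑ i ∈ Finset.Ico 0 N, edist ((f - g) (u (i + 1))) ((f - g) (u i)) := by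
        refine Finset.sum_congr (Finset.range_eq_Ico N) fun i hi => ?_
        obtain ⟨hfi, hgi, hone⟩ := hstep i (Finset.mem_Ico.1 hi).2
        rw [edist_dist, Real.dist_eq, Pi.sub_apply, Pi.sub_apply,
          abs_sub_sub_sub_eq_of_eq_or_eq hfi hgi hone]
    _ ≤ eVariationOn (f - g) (Icc a b) :=
        eVariationOn.sum_le_of_monotoneOn_Icc (hu.monotoneOn _) hu_mem

theorem eVariationOn_sub (hfg : IncrementsApart f g) (hab : a ≤ b)
    (hf : MonotoneOn f (Icc a b)) (hg : MonotoneOn g (Icc a b)) :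
    eVariationOn (f - g) (Icc a b) = ENNReal.ofReal (f b - f a + (g b - g a)) := by
  have ha : a ∈ Icc a b := left_mem_Icc.2 hab
  have hb : b ∈ Icc a b := right_mem_Icc.2 hab
  have hf' := hf.eVariationOn_eq ha hb
  have hg' := hg.eVariationOn_eq ha hb
  rw [inter_self] at hf' hg'
  refine le_antisymm ?_ ?_
  · rw [ENNReal.ofReal_add (sub_nonneg.2 (hf ha hb hab)) (sub_nonneg.2 (hg ha hb hab)),
      ← hf', ← hg']
    exact eVariationOn_sub_le f g _
  · rw [show f b - f a + (g b - g a) = f b + g b - (f a + g a) by ring]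
    exact hfg.ofReal_le_eVariationOn_sub hab hf hg

theorem eVariationOn_smul_sub (hfg : IncrementsApart f g) (hab : a ≤ b)
    (hf : MonotoneOn f (Icc a b)) (hg : MonotoneOn g (Icc a b)) {c : ℝ} (hc : 0 ≤ c) :
    eVariationOn (c • (f - g)) (Icc a b) = ENNReal.ofReal (c * (f b - f a + (g b - g a))) := by
  rw [eVariationOn_const_smul, hfg.eVariationOn_sub hab hf hg, Real.enorm_of_nonneg hc,
    ENNReal.ofReal_mul hc]

end IncrementsApart

namespace Real

theorem abs_ofDigits_sub_ofDigits_ge {b : ℕ} {x y : ℕ → Fin b} {n : ℕ}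
    (hxy : ∀ i < n, x i = y i) :
    ((b : ℝ) ^ (n + 1))⁻¹ * (|(x n : ℝ) - y n| - 1) ≤ |ofDigits x - ofDigits y| := by
  have hprefix : ∑ i ∈ Finset.range n, ofDigitsTerm x i =
      ∑ i ∈ Finset.range n, ofDigitsTerm y i :=
    Finset.sum_congr rfl fun i hi => by
      rw [ofDigitsTerm, ofDigitsTerm, hxy i (Finset.mem_range.1 hi)]
  have htail : |ofDigits (fun i => x (i + (n + 1))) - ofDigits (fun i => y (i + (n + 1)))| ≤ 1 := by
    simpa using abs_sub_le_of_le_of_le (ofDigits_nonneg _) (ofDigits_le_one _)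
      (ofDigits_nonneg _) (ofDigits_le_one _)
  have hB : (0 : ℝ) ≤ ((b : ℝ) ^ (n + 1))⁻¹ := by positivity
  rw [ofDigits_eq_sum_add_ofDigits x (n + 1), ofDigits_eq_sum_add_ofDigits y (n + 1),
    Finset.sum_range_succ, Finset.sum_range_succ, hprefix, ofDigitsTerm, ofDigitsTerm,
    show ∀ S X Y Tx Ty B : ℝ, S + X * B + B * Tx - (S + Y * B + B * Ty) = B * (X - Y + (Tx - Ty))
      from fun _ _ _ _ _ _ => by ring, abs_mul, abs_of_nonneg hB]
  generalize ofDigits (fun i => x (i + (n + 1))) - ofDigits (fun i => y (i + (n + 1))) = T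
    at htail ⊢
  refine mul_le_mul_of_nonneg_left ?_ hB
  have := abs_sub ((x n : ℝ) - y n + T) T
  rw [add_sub_cancel_right] at this
  linarith

theorem inv_pow_le_abs_ofDigits_sub_of_ne_one {x y : ℕ → Fin 3} (hx : ∀ n, x n ≠ 1)
    (hy : ∀ n, y n ≠ 1) {m : ℕ} (hm : x m ≠ y m) :
    ((3 : ℝ) ^ (m + 1))⁻¹ ≤ |ofDigits x - ofDigits y| := by
  have hex : ∃ n, x n ≠ y n := ⟨m, hm⟩
  have hfirst : ∀ i < Nat.find hex, x i = y i := fun i hi => not_not.1 (Nat.find_min hex hi)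
  have hgap : |(x (Nat.find hex) : ℝ) - y (Nat.find hex)| = 2 := by
    have := hx (Nat.find hex); have := hy (Nat.find hex); have := Nat.find_spec hex
    generalize x (Nat.find hex) = d, y (Nat.find hex) = d' at *
    fin_cases d <;> fin_cases d' <;> simp_all
  calc ((3 : ℝ) ^ (m + 1))⁻¹ ≤ ((3 : ℝ) ^ (Nat.find hex + 1))⁻¹ := by
        gcongr
        · norm_num
        · exact Nat.find_min' hex hm
    _ = ((3 : ℝ) ^ (Nat.find hex + 1))⁻¹ * (|(x (Nat.find hex) : ℝ) - y (Nat.find hex)| - 1) := by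
        rw [hgap]; norm_num
    _ ≤ |ofDigits x - ofDigits y| := by exact_mod_cast abs_ofDigits_sub_ofDigits_ge hfirst

variable {b : ℕ} [NeZero b] {x y : ℝ}

theorem exists_digits_ne (hb : 1 < b) (hx : x ∈ Ico 0 1) (hy : y ∈ Ico 0 1) (hxy : x ≠ y) :
    ∃ i, digits x b i ≠ digits y b i := by
  by_contra! h
  exact hxy (by rw [← ofDigits_digits hb hx, ← ofDigits_digits hb hy, funext h])

theorem abs_sub_le_of_digits_eq (hb : 1 < b) (hx : x ∈ Ico 0 1) (hy : y ∈ Ico 0 1) {n : ℕ}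
    (h : ∀ i < n, digits x b i = digits y b i) : |x - y| ≤ ((b : ℝ) ^ n)⁻¹ := by
  rw [← ofDigits_digits hb hx, ← ofDigits_digits hb hy]
  exact abs_ofDigits_sub_ofDigits_le h

end Real

noncomputable def sublevelVolume (Φ : ℝ → ℝ) (x : ℝ) : ℝ :=
  (volume {u ∈ Ico (0 : ℝ) 1 | Φ u < x}).toReal

namespace sublevelVolume

variable {Φ Ψ : ℝ → ℝ}

theorem volume_ne_top (Φ : ℝ → ℝ) (x : ℝ) : volume {u ∈ Ico (0 : ℝ) 1 | Φ u < x} ≠ ⊤ :=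
  ((measure_mono (sep_subset _ _)).trans_lt (by simp)).ne

theorem monotone (Φ : ℝ → ℝ) : Monotone (sublevelVolume Φ) := fun _ y hxy =>
  ENNReal.toReal_mono (volume_ne_top Φ y)
    (measure_mono fun _ hu => ⟨hu.1, hu.2.trans_le hxy⟩)

theorem eq_zero {x : ℝ} (hx : ∀ u ∈ Ico (0 : ℝ) 1, x ≤ Φ u) : sublevelVolume Φ x = 0 := by
  have : {u ∈ Ico (0 : ℝ) 1 | Φ u < x} = ∅ :=
    eq_empty_of_forall_notMem fun u hu => (hx u hu.1).not_gt hu.2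
  rw [sublevelVolume, this]; simp

theorem eq_one {x : ℝ} (hx : ∀ u ∈ Ico (0 : ℝ) 1, Φ u < x) : sublevelVolume Φ x = 1 := by
  have : {u ∈ Ico (0 : ℝ) 1 | Φ u < x} = Ico 0 1 := sep_eq_self_iff_mem_true.2 hx
  rw [sublevelVolume, this]; simp

theorem exists_mem_of_lt {p q : ℝ} (h : sublevelVolume Φ p < sublevelVolume Φ q) :
    ∃ u ∈ Ico (0 : ℝ) 1, p ≤ Φ u ∧ Φ u < q := by
  by_contra! hcon
  refine h.not_ge (ENNReal.toReal_mono (volume_ne_top Φ p) (measure_mono fun u hu => ?_))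
  exact ⟨hu.1, lt_of_not_ge fun hpu => (hcon u hu.1 hpu).not_gt hu.2⟩

-- The labels that `Φ` sends into `[p, q)` form a set of diameter at most `ε`.
theorem le_add {δ ε p q : ℝ} (hε : 0 ≤ ε)
    (hΦ : ∀ u ∈ Ico (0 : ℝ) 1, ∀ v ∈ Ico (0 : ℝ) 1, |Φ u - Φ v| < δ → |u - v| ≤ ε)
    (hpq : q - p < δ) : sublevelVolume Φ q ≤ sublevelVolume Φ p + ε := by
  set D := {u ∈ Ico (0 : ℝ) 1 | p ≤ Φ u ∧ Φ u < q}
  have hsub : {u ∈ Ico (0 : ℝ) 1 | Φ u < q} ⊆ {u ∈ Ico (0 : ℝ) 1 | Φ u < p} ∪ D :=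
    fun u hu => (lt_or_ge (Φ u) p).imp (fun h => ⟨hu.1, h⟩) fun h => ⟨hu.1, h, hu.2⟩
  have hD : volume D ≤ ENNReal.ofReal ε := by
    refine (Real.volume_le_diam D).trans (Metric.ediam_le fun u hu v hv => ?_)
    rw [edist_dist, Real.dist_eq]
    refine ENNReal.ofReal_le_ofReal (hΦ u hu.1 v hv.1 ?_)
    rw [abs_lt]; constructor <;> linarith [hu.2.1, hu.2.2, hv.2.1, hv.2.2]
  have := ENNReal.toReal_mono
    (ENNReal.add_ne_top.2 ⟨volume_ne_top Φ p, ENNReal.ofReal_ne_top⟩)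
    ((measure_mono hsub).trans ((measure_union_le _ _).trans (add_le_add_right hD _)))
  rwa [ENNReal.toReal_add (volume_ne_top Φ p) ENNReal.ofReal_ne_top,
    ENNReal.toReal_ofReal hε] at this

theorem uniformContinuous
    (hΦ : ∀ ε > 0, ∃ δ > 0, ∀ u ∈ Ico (0 : ℝ) 1, ∀ v ∈ Ico (0 : ℝ) 1,
      |Φ u - Φ v| < δ → |u - v| ≤ ε) :
    UniformContinuous (sublevelVolume Φ) := by
  refine Metric.uniformContinuous_iff.2 fun ε hε => ?_
  obtain ⟨δ, hδ, hΦδ⟩ := hΦ (ε / 2) (half_pos hε)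
  refine ⟨δ, hδ, fun {x y} hxy => ?_⟩
  rw [Real.dist_eq, abs_lt] at hxy
  rw [Real.dist_eq, abs_lt]
  have := le_add (half_pos hε).le hΦδ (q := x) (p := y) (by linarith)
  have := le_add (half_pos hε).le hΦδ (q := y) (p := x) (by linarith)
  constructor <;> linarith

theorem incrementsApart {δ : ℝ} (hδ : 0 < δ)
    (hΦΨ : ∀ u ∈ Ico (0 : ℝ) 1, ∀ v ∈ Ico (0 : ℝ) 1, δ ≤ |Φ u - Ψ v|) :
    IncrementsApart (sublevelVolume Φ) (sublevelVolume Ψ) := by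
  refine ⟨δ, hδ, fun p q hpq hlen => ?_⟩
  by_contra! h
  obtain ⟨u, hu, hpu, huq⟩ := exists_mem_of_lt ((monotone Φ hpq).lt_of_ne h.1)
  obtain ⟨v, hv, hpv, hvq⟩ := exists_mem_of_lt ((monotone Ψ hpq).lt_of_ne h.2)
  have : |Φ u - Ψ v| < δ := abs_sub_lt_iff.2 ⟨by linarith, by linarith⟩
  linarith [hΦΨ u hu v hv]

end sublevelVolume

noncomputable def cantorDigits (h u : ℝ) (n : ℕ) : Fin 3 :=
  2 * (Real.digits (if Even n then h else u) 2 (n / 2)).castSucc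

noncomputable def cantorEmbedding (h u : ℝ) : ℝ := Real.ofDigits (cantorDigits h u)

noncomputable def cantorStaircase (h : ℝ) : ℝ → ℝ := sublevelVolume (cantorEmbedding h)

theorem cantorDigits_ne_one (h u : ℝ) (n : ℕ) : cantorDigits h u n ≠ 1 := by
  unfold cantorDigits
  generalize Real.digits _ 2 (n / 2) = d
  revert d
  decide

theorem two_mul_castSucc_injective : Function.Injective fun d : Fin 2 => 2 * d.castSucc := by
  decide

theorem cantorDigits_two_mul (h u : ℝ) (j : ℕ) :
    cantorDigits h u (2 * j) = 2 * (Real.digits h 2 j).castSucc := by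
  simp [cantorDigits]

theorem cantorDigits_two_mul_add_one (h u : ℝ) (j : ℕ) :
    cantorDigits h u (2 * j + 1) = 2 * (Real.digits u 2 j).castSucc := by
  simp [cantorDigits, show (2 * j + 1) / 2 = j by omega]

theorem inv_pow_le_abs_cantorEmbedding_sub_of_digits_ne_fst {h h' : ℝ} (u v : ℝ) {j : ℕ}
    (hj : Real.digits h 2 j ≠ Real.digits h' 2 j) :
    ((3 : ℝ) ^ (2 * j + 1))⁻¹ ≤ |cantorEmbedding h u - cantorEmbedding h' v| :=
  Real.inv_pow_le_abs_ofDigits_sub_of_ne_one (cantorDigits_ne_one h u)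
    (cantorDigits_ne_one h' v) <| by
    rw [cantorDigits_two_mul, cantorDigits_two_mul]
    exact two_mul_castSucc_injective.ne hj

theorem inv_pow_le_abs_cantorEmbedding_sub_of_digits_ne_snd (h : ℝ) {u v : ℝ} {j : ℕ}
    (hj : Real.digits u 2 j ≠ Real.digits v 2 j) :
    ((3 : ℝ) ^ (2 * j + 1 + 1))⁻¹ ≤ |cantorEmbedding h u - cantorEmbedding h v| :=
  Real.inv_pow_le_abs_ofDigits_sub_of_ne_one (cantorDigits_ne_one h u)
    (cantorDigits_ne_one h v) <| by
    rw [cantorDigits_two_mul_add_one, cantorDigits_two_mul_add_one]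
    exact two_mul_castSucc_injective.ne hj

theorem exists_le_abs_cantorEmbedding_sub {h h' : ℝ} (hh : h ∈ Ico (0 : ℝ) 1)
    (hh' : h' ∈ Ico (0 : ℝ) 1) (hne : h ≠ h') :
    ∃ δ > 0, ∀ u v, δ ≤ |cantorEmbedding h u - cantorEmbedding h' v| := by
  obtain ⟨j, hj⟩ := Real.exists_digits_ne one_lt_two hh hh' hne
  exact ⟨_, by positivity, fun u v => inv_pow_le_abs_cantorEmbedding_sub_of_digits_ne_fst u v hj⟩

theorem abs_sub_le_of_abs_cantorEmbedding_sub_lt (h : ℝ) {ε : ℝ} (hε : 0 < ε) :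
    ∃ δ > 0, ∀ u ∈ Ico (0 : ℝ) 1, ∀ v ∈ Ico (0 : ℝ) 1,
      |cantorEmbedding h u - cantorEmbedding h v| < δ → |u - v| ≤ ε := by
  obtain ⟨n, hn⟩ := exists_pow_lt_of_lt_one hε (inv_lt_one_of_one_lt₀ one_lt_two)
  refine ⟨((3 : ℝ) ^ (2 * n))⁻¹, by positivity, fun u hu v hv huv => ?_⟩
  have hdigits : ∀ i < n, Real.digits u 2 i = Real.digits v 2 i := by
    intro i hi
    by_contra hne
    have := inv_pow_le_abs_cantorEmbedding_sub_of_digits_ne_snd h hne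
    have : ((3 : ℝ) ^ (2 * n))⁻¹ ≤ ((3 : ℝ) ^ (2 * i + 1 + 1))⁻¹ := by
      gcongr
      · norm_num
      · omega
    linarith
  have := Real.abs_sub_le_of_digits_eq one_lt_two hu hv hdigits
  rw [← inv_pow] at this
  push_cast at this
  linarith

namespace cantorStaircase

theorem uniformContinuous (h : ℝ) : UniformContinuous (cantorStaircase h) :=
  sublevelVolume.uniformContinuous fun _ hε => abs_sub_le_of_abs_cantorEmbedding_sub_lt h hε

theorem monotone (h : ℝ) : Monotone (cantorStaircase h) := sublevelVolume.monotone _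

theorem apply_zero (h : ℝ) : cantorStaircase h 0 = 0 :=
  sublevelVolume.eq_zero fun _ _ => Real.ofDigits_nonneg _

-- `cantorEmbedding h u = 1` is possible, so `G_h = 1` is only immediate to the right of `1`.
theorem apply_one (h : ℝ) : cantorStaircase h 1 = 1 := by
  have hright : Tendsto (cantorStaircase h) (𝓝[>] 1) (𝓝 1) :=
    tendsto_const_nhds.congr' <| eventually_nhdsWithin_of_forall fun _ hx =>
      (sublevelVolume.eq_one fun _ _ => (Real.ofDigits_le_one _).trans_lt hx).symm
  exact tendsto_nhds_unique
    ((uniformContinuous h).continuous.continuousWithinAt.tendsto) hright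

theorem incrementsApart {h h' : ℝ} (hh : h ∈ Ico (0 : ℝ) 1) (hh' : h' ∈ Ico (0 : ℝ) 1)
    (hne : h ≠ h') : IncrementsApart (cantorStaircase h) (cantorStaircase h') :=
  let ⟨_, hδ, hsep⟩ := exists_le_abs_cantorEmbedding_sub hh hh' hne
  sublevelVolume.incrementsApart hδ fun u _ v _ => hsep u v

end cantorStaircase

theorem mem_Ico_of_mem_Icc_quarter {h : ℝ} (hh : h ∈ Icc (0 : ℝ) (1 / 4)) :
    h ∈ Ico (0 : ℝ) 1 ∧ h + 1 / 2 ∈ Ico (0 : ℝ) 1 :=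
  ⟨⟨hh.1, by linarith [hh.2]⟩, ⟨by linarith [hh.1], by linarith [hh.2]⟩⟩

noncomputable def separatedFamily (r h : ℝ) : ℝ → ℝ :=
  (r / 2) • (cantorStaircase h - cantorStaircase (h + 1 / 2))

namespace separatedFamily

variable {r h₁ h₂ : ℝ}

theorem continuous (r h : ℝ) : Continuous (separatedFamily r h) :=
  continuous_const.smul ((cantorStaircase.uniformContinuous h).continuous.sub
    (cantorStaircase.uniformContinuous _).continuous)

theorem apply_zero (r h : ℝ) : separatedFamily r h 0 = 0 := by
  simp [separatedFamily, cantorStaircase.apply_zero]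

theorem apply_one (r h : ℝ) : separatedFamily r h 1 = 0 := by
  simp [separatedFamily, cantorStaircase.apply_one]

theorem eVariationOn_eq (hr : 0 ≤ r) (hh₁ : h₁ ∈ Icc (0 : ℝ) (1 / 4)) :
    eVariationOn (separatedFamily r h₁) (Icc 0 1) = ENNReal.ofReal r := by
  obtain ⟨h1, h1'⟩ := mem_Ico_of_mem_Icc_quarter hh₁
  rw [separatedFamily, (cantorStaircase.incrementsApart h1 h1' (by linarith)).eVariationOn_smul_sub
    zero_le_one ((cantorStaircase.monotone _).monotoneOn _)
    ((cantorStaircase.monotone _).monotoneOn _) (by positivity)]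
  simp only [cantorStaircase.apply_zero, cantorStaircase.apply_one]
  congr 1
  ring

theorem eVariationOn_sub (hr : 0 ≤ r) (hh₁ : h₁ ∈ Icc (0 : ℝ) (1 / 4))
    (hh₂ : h₂ ∈ Icc (0 : ℝ) (1 / 4)) (hne : h₁ ≠ h₂) :
    eVariationOn (fun x => separatedFamily r h₁ x - separatedFamily r h₂ x) (Icc 0 1) =
      ENNReal.ofReal (2 * r) := by
  set G := cantorStaircase
  obtain ⟨h1, h1'⟩ := mem_Ico_of_mem_Icc_quarter hh₁
  obtain ⟨h2, h2'⟩ := mem_Ico_of_mem_Icc_quarter hh₂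
  have hdiff : (fun x => separatedFamily r h₁ x - separatedFamily r h₂ x) =
      (r / 2) • ((G h₁ + G (h₂ + 1 / 2)) - (G h₂ + G (h₁ + 1 / 2))) := by
    ext x
    simp only [separatedFamily, Pi.smul_apply, Pi.sub_apply, Pi.add_apply, smul_eq_mul]
    ring
  have hapart : IncrementsApart (G h₁ + G (h₂ + 1 / 2)) (G h₂ + G (h₁ + 1 / 2)) :=
    .add (cantorStaircase.incrementsApart h1 h2 hne)
      (cantorStaircase.incrementsApart h1 h1' (by linarith))
      (cantorStaircase.incrementsApart h2' h2 (by linarith [hh₁.1, hh₂.2]))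
      (cantorStaircase.incrementsApart h2' h1' fun h => hne (by linarith))
  have hmono (h h' : ℝ) : MonotoneOn (G h + G h') (Icc 0 1) :=
    ((cantorStaircase.monotone h).add (cantorStaircase.monotone h')).monotoneOn _
  rw [hdiff, hapart.eVariationOn_smul_sub zero_le_one (hmono _ _) (hmono _ _) (by positivity)]
  simp only [G, Pi.add_apply, cantorStaircase.apply_zero, cantorStaircase.apply_one]
  congr 1
  ring

end separatedFamily

/-- For every `r > 0` there is an uncountable family `{F_h : h ∈ J}` of continuous
functions of bounded variation on `[0,1]`, indexed by a nondegenerate interval `J`,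
with `V(F_h) = r`, `F_h(0) = F_h(1) = 0`, and `V(F_{h₁} − F_{h₂}) = 2r` for all
distinct `h₁, h₂ ∈ J`. -/
theorem uncountable_separated_family (r : ℝ) (hr : 0 < r) :
    ∃ (a b : ℝ) (F : ℝ → ℝ → ℝ), a < b ∧
      (∀ h ∈ Icc a b,
        ContinuousOn (F h) (Icc 0 1) ∧
        eVariationOn (F h) (Icc 0 1) = ENNReal.ofReal r ∧
        F h 0 = 0 ∧ F h 1 = 0) ∧
      (∀ h₁ ∈ Icc a b, ∀ h₂ ∈ Icc a b, h₁ ≠ h₂ →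
        eVariationOn (fun x => F h₁ x - F h₂ x) (Icc 0 1) = ENNReal.ofReal (2 * r)) :=
  ⟨0, 1 / 4, separatedFamily r, by norm_num,
    fun h hh => ⟨(separatedFamily.continuous r h).continuousOn,
      separatedFamily.eVariationOn_eq hr.le hh, separatedFamily.apply_zero r h,
      separatedFamily.apply_one r h⟩,
    fun _ hh₁ _ hh₂ hne => separatedFamily.eVariationOn_sub hr.le hh₁ hh₂ hne⟩
end
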